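/- arXiv:1405.3375 — 2 statements merged into one kernel-verified Lean document; each statement's English description precedes it below -/
import Mathlib

section
/- An R-module is injective if and only if it is both weak injective and Gorenstein weak injective. -/
open CategoryTheory

universe u

noncomputable section

variable (R : Type u) [Ring R]

/-- Vanishing of `Ext^n_R(N, M)` for left `R`-modules, expressed via the `Ext` bifunctor
on the `ℤ`-linear abelian category `ModuleCat R`. -/
def ExtVanish (n : ℕ) (N M : ModuleCat.{u} R) : Prop :=
  Subsingleton (((_root_.Ext ℤ (ModuleCat.{u} R) n).obj (Opposite.op N)).obj M)

/-- An `R`-module is super finitely presented if it admits a resolution by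
finitely generated projective modules. -/
def SuperFinitelyPresented (N : ModuleCat.{u} R) : Prop :=
  ∃ (F : ℕ → ModuleCat.{u} R) (d : ∀ n, F (n + 1) →ₗ[R] F n) (ε : F 0 →ₗ[R] N),
    (∀ n, Module.Finite R (F n)) ∧ (∀ n, Module.Projective R (F n)) ∧
    Function.Surjective ε ∧ Function.Exact (d 0) ε ∧
    (∀ n, Function.Exact (d (n + 1)) (d n))

/-- An `R`-module `W` is weak injective if `Ext^1_R(N, W) = 0` for every super finitely
presented module `N`. -/
def WeakInjective (W : ModuleCat.{u} R) : Prop :=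
  ∀ N : ModuleCat.{u} R, SuperFinitelyPresented R N → ExtVanish R 1 N W

/-- `wid_R M ≤ n` : `Ext^{n+1}_R(N, M) = 0` for every super finitely presented `N`. -/
def WidLE (M : ModuleCat.{u} R) (n : ℕ) : Prop :=
  ∀ N : ModuleCat.{u} R, SuperFinitelyPresented R N → ExtVanish R (n + 1) N M

/-- The weak injective dimension, as an element of `ℕ∞`. -/
def Wid (M : ModuleCat.{u} R) : ℕ∞ :=
  sInf {c : ℕ∞ | ∃ n : ℕ, c = n ∧ WidLE R M n}

/-- A doubly infinite exact complex of injective modules which stays exact after applying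
`Hom_R(W, -)` for every module `W` in the test class `𝒯`. -/
def IsTotallyAcyclicInjComplex (𝒯 : ModuleCat.{u} R → Prop)
    (I : ℤ → ModuleCat.{u} R) (d : ∀ n : ℤ, I n →ₗ[R] I (n + 1)) : Prop :=
  (∀ n, Module.Injective R (I n)) ∧
  (∀ n, Function.Exact (d n) (d (n + 1))) ∧
  (∀ W : ModuleCat.{u} R, 𝒯 W → ∀ n,
    Function.Exact (fun g : W →ₗ[R] I n => (d n).comp g)
      (fun g : W →ₗ[R] I (n + 1) => (d (n + 1)).comp g))

/-- `M` is Gorenstein injective relative to the test class `𝒯` : `M` is the cokernel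
`Coker (I_1 → I_0)` of a `Hom(𝒯, -)`-exact exact complex of injective modules. -/
def GorensteinRelInjective (𝒯 : ModuleCat.{u} R → Prop) (M : ModuleCat.{u} R) : Prop :=
  ∃ (I : ℤ → ModuleCat.{u} R) (d : ∀ n : ℤ, I n →ₗ[R] I (n + 1)) (π : I 0 →ₗ[R] M),
    IsTotallyAcyclicInjComplex R 𝒯 I d ∧
    Function.Surjective π ∧ Function.Exact (d (-1)) π

/-- Gorenstein weak injective modules: the test class is that of weak injective modules. -/
def GorensteinWeakInjective (M : ModuleCat.{u} R) : Prop :=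
  GorensteinRelInjective R (WeakInjective R) M

/-- Gorenstein injective modules: the test class is that of injective modules. -/
def GorensteinInjective (M : ModuleCat.{u} R) : Prop :=
  GorensteinRelInjective R (fun E => Module.Injective R E) M

/-- The data of an exact sequence `0 → M → G^0 → ⋯ → G^n → 0` (the modules `G^i` for
`i > n` being trivial). -/
def IsFiniteCoresolution (M : ModuleCat.{u} R) (n : ℕ) (G : ℕ → ModuleCat.{u} R)
    (d : ∀ i, G i →ₗ[R] G (i + 1)) (ε : M →ₗ[R] G 0) : Prop :=
  Function.Injective ε ∧ Function.Exact ε (d 0) ∧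
  (∀ i, Function.Exact (d i) (d (i + 1))) ∧
  (∀ i, n < i → ∀ x : G i, x = 0)

/-- `Gwid_R M ≤ n` : `M` has a coresolution of length `n` by Gorenstein weak injective
modules. -/
def GwidLE (M : ModuleCat.{u} R) (n : ℕ) : Prop :=
  ∃ (G : ℕ → ModuleCat.{u} R) (d : ∀ i, G i →ₗ[R] G (i + 1)) (ε : M →ₗ[R] G 0),
    IsFiniteCoresolution R M n G d ε ∧ ∀ i, GorensteinWeakInjective R (G i)

/-- The Gorenstein weak injective dimension, as an element of `ℕ∞`. -/
def Gwid (M : ModuleCat.{u} R) : ℕ∞ :=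
  sInf {c : ℕ∞ | ∃ n : ℕ, c = n ∧ GwidLE R M n}

/-- `Gid_R M ≤ n`, via coresolutions by Gorenstein injective modules. -/
def GidLE (M : ModuleCat.{u} R) (n : ℕ) : Prop :=
  ∃ (G : ℕ → ModuleCat.{u} R) (d : ∀ i, G i →ₗ[R] G (i + 1)) (ε : M →ₗ[R] G 0),
    IsFiniteCoresolution R M n G d ε ∧ ∀ i, GorensteinInjective R (G i)

/-- The Gorenstein injective dimension, as an element of `ℕ∞`. -/
def Gid (M : ModuleCat.{u} R) : ℕ∞ :=
  sInf {c : ℕ∞ | ∃ n : ℕ, c = n ∧ GidLE R M n}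

/-- `id_R M ≤ n`, via coresolutions by injective modules. -/
def IdLE (M : ModuleCat.{u} R) (n : ℕ) : Prop :=
  ∃ (G : ℕ → ModuleCat.{u} R) (d : ∀ i, G i →ₗ[R] G (i + 1)) (ε : M →ₗ[R] G 0),
    IsFiniteCoresolution R M n G d ε ∧ ∀ i, Module.Injective R (G i)

/-- The injective dimension, as an element of `ℕ∞`. -/
def Idim (M : ModuleCat.{u} R) : ℕ∞ :=
  sInf {c : ℕ∞ | ∃ n : ℕ, c = n ∧ IdLE R M n}

/-- The data of an exact sequence `0 → P_n → ⋯ → P_0 → M → 0`. -/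
def IsFiniteResolution (M : ModuleCat.{u} R) (n : ℕ) (P : ℕ → ModuleCat.{u} R)
    (d : ∀ i, P (i + 1) →ₗ[R] P i) (ε : P 0 →ₗ[R] M) : Prop :=
  Function.Surjective ε ∧ Function.Exact (d 0) ε ∧
  (∀ i, Function.Exact (d (i + 1)) (d i)) ∧
  (∀ i, n < i → ∀ x : P i, x = 0)

/-- `pd_R M ≤ n`, via resolutions by projective modules. -/
def PdLE (M : ModuleCat.{u} R) (n : ℕ) : Prop :=
  ∃ (P : ℕ → ModuleCat.{u} R) (d : ∀ i, P (i + 1) →ₗ[R] P i) (ε : P 0 →ₗ[R] M),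
    IsFiniteResolution R M n P d ε ∧ ∀ i, Module.Projective R (P i)

end

variable (R : Type u) [Ring R]

/-- A short exact sequence `0 → L → M → N → 0` of `R`-modules. -/
def ShortExactSeq (L M N : ModuleCat.{u} R) (f : L →ₗ[R] M) (g : M →ₗ[R] N) : Prop :=
  Function.Injective f ∧ Function.Surjective g ∧ Function.Exact f g

/-- Exactness of `0 → Hom(C, X) → Hom(B, X) → Hom(A, X) → 0` induced by
`0 → A → B → C → 0`. -/
def HomContraExact (X : ModuleCat.{u} R) {A B C : ModuleCat.{u} R}
    (f : A →ₗ[R] B) (g : B →ₗ[R] C) : Prop :=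
  Function.Injective (fun h : C →ₗ[R] X => h.comp g) ∧
  Function.Exact (fun h : C →ₗ[R] X => h.comp g) (fun h : B →ₗ[R] X => h.comp f) ∧
  Function.Surjective (fun h : B →ₗ[R] X => h.comp f)

/-- A short exact sequence is `GWI`-copure exact if `Hom_R(-, X)` leaves it exact for
every Gorenstein weak injective module `X`. -/
def GWICopureExact {A B C : ModuleCat.{u} R} (f : A →ₗ[R] B) (g : B →ₗ[R] C) : Prop :=
  ShortExactSeq R A B C f g ∧
  ∀ X : ModuleCat.{u} R, GorensteinWeakInjective R X → HomContraExact R X f g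

/-- `M` is `GWI`-copure injective if `Hom_R(-, M)` is exact on every `GWI`-copure exact
sequence. -/
def GWICopureInjectiveMod (M : ModuleCat.{u} R) : Prop :=
  ∀ (A B C : ModuleCat.{u} R) (f : A →ₗ[R] B) (g : B →ₗ[R] C),
    GWICopureExact R f g → HomContraExact R M f g

/-- `φ : M → G` is a Gorenstein weak injective preenvelope of `M`. -/
def GWIPreenvelope (M G : ModuleCat.{u} R) (φ : M →ₗ[R] G) : Prop :=
  GorensteinWeakInjective R G ∧
  ∀ G' : ModuleCat.{u} R, GorensteinWeakInjective R G' →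
    ∀ f : M →ₗ[R] G', ∃ g : G →ₗ[R] G', g.comp φ = f

/-- A `WI`-pure Tate injective resolution of `M` : an injective resolution
`0 → M → E^0 → E^1 → ⋯`, a `WI`-pure exact complex `T` of injectives, and a chain map
`u : E → T` which is an isomorphism in all sufficiently large degrees. -/
def WIPureTateInjectiveResolution (M : ModuleCat.{u} R)
    (E : ℕ → ModuleCat.{u} R) (dE : ∀ n, E n →ₗ[R] E (n + 1)) (ε : M →ₗ[R] E 0)
    (T : ℤ → ModuleCat.{u} R) (dT : ∀ n : ℤ, T n →ₗ[R] T (n + 1))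
    (u : ∀ n : ℕ, E n →ₗ[R] T n) : Prop :=
  (∀ n, Module.Injective R (E n)) ∧ Function.Injective ε ∧
  Function.Exact ε (dE 0) ∧ (∀ n, Function.Exact (dE n) (dE (n + 1))) ∧
  IsTotallyAcyclicInjComplex R (WeakInjective R) T dT ∧
  (∀ n : ℕ, (dT n).comp (u n) = (u (n + 1)).comp (dE n)) ∧
  ∃ N : ℕ, ∀ n, N ≤ n → Function.Bijective (u n)

/-- Vanishing of the relative Tate cohomology `Êxt^i_GWI(N, M)` for all `i ∈ ℤ`,
computed from the `WI`-pure exact complex `T` : the complex `Hom_R(N, T)` is exact. -/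
def ExtHatVanishesAll (N : ModuleCat.{u} R) (T : ℤ → ModuleCat.{u} R)
    (dT : ∀ n : ℤ, T n →ₗ[R] T (n + 1)) : Prop :=
  ∀ n : ℤ, Function.Exact (fun g : N →ₗ[R] T n => (dT n).comp g)
    (fun g : N →ₗ[R] T (n + 1) => (dT (n + 1)).comp g)

/-!
An injective module `M` has vanishing `Ext^{≥1}(-, M)`, and it is the cokernel of the
2-periodic complex `⋯ → M --id--> M --0--> M --id--> M → ⋯`, which is split exact and hence
stays exact under any `Hom_R(W, -)`. Conversely, if `M = Coker (I₋₁ → I₀)` for a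
`Hom_R(WI, -)`-exact complex of injectives and `M` is itself weak injective, then the
embedding `M ↪ I₁` induced by `I₀ → I₁` lifts along `I₀ → I₁`; the lift splits `I₀ ↠ M`, so
`M` is a direct summand of the injective module `I₀`.
-/

universe v

lemma isZero_Ext_succ_of_injective {S : Type*} [Ring S] {C : Type*} [Category* C] [Abelian C]
    [Linear S C] [EnoughProjectives C] (X Y : C) [Injective Y] (n : ℕ) :
    Limits.IsZero (((Ext S C (n + 1)).obj (Opposite.op X)).obj Y) := by
  let P := ProjectiveResolution.of X
  refine Limits.IsZero.of_iso ?_ (P.isoExt (n + 1) Y)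
  rw [← HomologicalComplex.exactAt_iff_isZero_homology,
    HomologicalComplex.exactAt_iff' _ n (n + 1) (n + 2) (by simp) (by simp),
    ShortComplex.moduleCat_exact_iff]
  intro (f : P.complex.X (n + 1) ⟶ Y) hf
  exact ⟨(P.exact_succ n).descToInjective f hf, (P.exact_succ n).comp_descToInjective f hf⟩

lemma extVanish_succ_of_injective (n : ℕ) (N M : ModuleCat.{u} R) [Module.Injective R M] :
    ExtVanish R (n + 1) N M :=
  haveI := Module.injective_object_of_injective_module R M
  ModuleCat.isZero_iff_subsingleton.mp (isZero_Ext_succ_of_injective N M n)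

lemma Module.Injective.of_retract {M I : Type v} [AddCommGroup M] [Module R M] [AddCommGroup I]
    [Module R I] [Module.Injective R I] (s : M →ₗ[R] I) (p : I →ₗ[R] M) (hps : p ∘ₗ s = .id) :
    Module.Injective R M where
  out X Y _ _ _ _ f hf g := by
    obtain ⟨h, hh⟩ := Module.Injective.out f hf (s ∘ₗ g)
    exact ⟨p ∘ₗ h, fun x => by simp [hh x, ← LinearMap.comp_apply p s, hps]⟩

def periodicDiff (M : Type*) [AddCommGroup M] [Module R M] (n : ℤ) : M →ₗ[R] M :=
  if Even n then .id else 0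

lemma exact_periodicDiff (M : Type*) [AddCommGroup M] [Module R M] (n : ℤ) :
    Function.Exact (periodicDiff R M n) (periodicDiff R M (n + 1)) := by
  by_cases h : Even n <;> simp [periodicDiff, h, ← Int.not_even_iff_odd, Function.Exact, eq_comm]

lemma exact_periodicDiff_comp (W M : Type*) [AddCommGroup W] [Module R W] [AddCommGroup M]
    [Module R M] (n : ℤ) :
    Function.Exact (fun g : W →ₗ[R] M => periodicDiff R M n ∘ₗ g)
      (fun g => periodicDiff R M (n + 1) ∘ₗ g) := by
  by_cases h : Even n <;> simp [periodicDiff, h, ← Int.not_even_iff_odd, Function.Exact]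

lemma gorensteinRelInjective_of_injective (𝒯 : ModuleCat.{u} R → Prop) (M : ModuleCat.{u} R)
    [Module.Injective R M] : GorensteinRelInjective R 𝒯 M := by
  refine ⟨fun _ => M, periodicDiff R M, .id,
    ⟨fun _ => inferInstance, exact_periodicDiff R M, fun W _ => exact_periodicDiff_comp R W M⟩,
    Function.surjective_id, ?_⟩
  convert exact_periodicDiff R M (-1)
  simp [periodicDiff]

lemma exists_injective_comp_eq_of_exact {A B C M : Type*} [AddCommGroup A] [Module R A]
    [AddCommGroup B] [Module R B] [AddCommGroup C] [Module R C] [AddCommGroup M] [Module R M]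
    {f : A →ₗ[R] B} {g : B →ₗ[R] C} {π : B →ₗ[R] M} (hfg : Function.Exact f g)
    (hπ : Function.Exact f π) (hπs : Function.Surjective π) :
    ∃ j : M →ₗ[R] C, Function.Injective j ∧ j ∘ₗ π = g :=
  ⟨(LinearMap.range f).liftQ g (hfg · |>.mpr) ∘ₗ (hπ.linearEquivOfSurjective hπs).symm,
    (LinearMap.injective_range_liftQ_of_exact hfg).comp (LinearEquiv.injective _),
    by ext; simp; rfl⟩

lemma GorensteinRelInjective.injective_of_mem {𝒯 : ModuleCat.{u} R → Prop} {M : ModuleCat.{u} R}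
    (hG : GorensteinRelInjective R 𝒯 M) (hM : 𝒯 M) : Module.Injective R M := by
  obtain ⟨I, d, π, ⟨hI, hd, hHom⟩, hπs, hπ⟩ := hG
  obtain ⟨j, hj, hjπ⟩ := exists_injective_comp_eq_of_exact R (hd (-1)) hπ hπs
  have hdj : d 1 ∘ₗ j = 0 := by
    refine (LinearMap.cancel_right hπs).mp ?_
    rw [LinearMap.comp_assoc, hjπ, LinearMap.zero_comp]
    exact (hd 0).linearMap_comp_eq_zero
  -- `Hom_R(M, -)`-exactness of the complex lifts `j` along `d 0`, which splits `π`.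
  obtain ⟨s, hs⟩ := (hHom M hM 0 j).mp hdj
  refine Module.Injective.of_retract R s π (LinearMap.ext fun m => hj ?_)
  simpa [← hs] using LinearMap.congr_fun hjπ (s m)

/-- An `R`-module is injective iff it is both weak injective and Gorenstein weak
injective. -/
theorem injective_iff_weakInjective_and_gorensteinWeakInjective (M : ModuleCat.{u} R) :
    Module.Injective R M ↔ WeakInjective R M ∧ GorensteinWeakInjective R M :=
  ⟨fun _ => ⟨fun N _ => extVanish_succ_of_injective R 0 N M,
      gorensteinRelInjective_of_injective R _ M⟩,
    fun ⟨hW, hG⟩ => hG.injective_of_mem R hW⟩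
end

section
/- The class of Gorenstein weak injective R-modules is closed under extensions: if 0 → L → M → N → 0 is exact with L and N Gorenstein weak injective, then M is Gorenstein weak injective. -/
open CategoryTheory

universe u

variable (R : Type u) [Ring R]

/-!
Choose totally acyclic complexes `IL → L` and `IN → N`. The complex for `M` is `IL ⊕ IN` with
differential `(x, y) ↦ (dL x + h y, dN y)`, where `h n : IN n → IL (n + 1)` satisfies
`dL ∘ h n + h (n + 1) ∘ dN = 0` (the horseshoe construction). Each `IN m` is injective, hence weak
injective, so `Hom(IN m, IL)` is exact. This gives `Ext¹(IN 0, L) = 0`, so `IN 0 → N` lifts to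
`s : IN 0 → M`, and we start with `h 0 = e ∘ s` for an extension `e : M → IL 1` of `L ↪ IL 1`.
The family `h` is then extended upwards using that the `IL n` are injective, and downwards using
the exactness of `Hom(IN m, IL)`. Exactness of the total complex, and of its `Hom(W, -)` for weak
injective `W`, follows degreewise from that of `IL` and `IN`.
-/

universe v

section LinearAlgebra

variable {R}

theorem LinearMap.exists_comp_eq_of_ker_le {A B C : Type v} [AddCommGroup A] [Module R A]
    [AddCommGroup B] [Module R B] [AddCommGroup C] [Module R C] [hC : Module.Injective R C]
    (p : A →ₗ[R] B) (φ : A →ₗ[R] C) (h : LinearMap.ker p ≤ LinearMap.ker φ) :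
    ∃ ψ : B →ₗ[R] C, ψ ∘ₗ p = φ := by
  obtain ⟨ψ, hψ⟩ := Module.Injective.out ((LinearMap.ker p).liftQ p le_rfl)
    (LinearMap.ker_eq_bot.mp (Submodule.ker_liftQ_eq_bot _ _ _ le_rfl))
    ((LinearMap.ker p).liftQ φ h)
  exact ⟨ψ, LinearMap.ext fun a => hψ (Submodule.Quotient.mk a)⟩

section

variable {A B C : Type*} [AddCommGroup A] [Module R A] [AddCommGroup B] [Module R B]
  [AddCommGroup C] [Module R C]

theorem LinearMap.exists_comp_eq_of_surjective (p : A →ₗ[R] B) (hp : Function.Surjective p)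
    (φ : A →ₗ[R] C) (h : LinearMap.ker p ≤ LinearMap.ker φ) :
    ∃ ψ : B →ₗ[R] C, ψ ∘ₗ p = φ :=
  ⟨(LinearMap.ker p).liftQ φ h ∘ₗ (p.quotKerEquivOfSurjective hp).symm.toLinearMap,
    LinearMap.ext fun a => by
      change (LinearMap.ker p).liftQ φ h ((p.quotKerEquivOfSurjective hp).symm (p a)) = φ a
      rw [(p.quotKerEquivOfSurjective hp).symm_apply_eq.mpr
        (LinearMap.quotKerEquivOfSurjective_apply_mk p hp a).symm]
      rfl⟩

theorem LinearMap.exists_comp_eq_of_injective (ι : B →ₗ[R] C) (hι : Function.Injective ι)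
    (φ : A →ₗ[R] C) (h : LinearMap.range φ ≤ LinearMap.range ι) :
    ∃ ψ : A →ₗ[R] B, ι ∘ₗ ψ = φ :=
  ⟨(LinearEquiv.ofInjective ι hι).symm.toLinearMap ∘ₗ φ.codRestrict _ fun a => h ⟨a, rfl⟩,
    LinearMap.ext fun a => by simp⟩

end

theorem Module.Injective.prod {A B : Type v} [AddCommGroup A] [Module R A] [AddCommGroup B]
    [Module R B] [Module.Injective R A] [Module.Injective R B] :
    Module.Injective R (A × B) := by
  refine ⟨fun X Y _ _ _ _ ι hι φ => ?_⟩
  obtain ⟨ψ₁, hψ₁⟩ := Module.Injective.out ι hι (LinearMap.fst R A B ∘ₗ φ)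
  obtain ⟨ψ₂, hψ₂⟩ := Module.Injective.out ι hι (LinearMap.snd R A B ∘ₗ φ)
  exact ⟨ψ₁.prod ψ₂, fun x => Prod.ext (hψ₁ x) (hψ₂ x)⟩

end LinearAlgebra

section Ext

variable {R}

theorem extVanish_one_of_injective (N W : ModuleCat.{u} R) [Module.Injective R W] :
    ExtVanish R 1 N W := by
  let P := ProjectiveResolution.of N
  refine ModuleCat.subsingleton_of_isZero (Limits.IsZero.of_iso ?_ (P.isoExt (R := ℤ) 1 W))
  have hP : Function.Exact (P.complex.d 2 1) (P.complex.d 1 0) := by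
    have h := P.complex_exactAt_succ 0
    rw [HomologicalComplex.exactAt_iff' _ 2 1 0 (by simp) (by simp),
      ShortComplex.moduleCat_exact_iff_range_eq_ker] at h
    exact LinearMap.exact_iff.mpr h.symm
  rw [← HomologicalComplex.exactAt_iff_isZero_homology,
    HomologicalComplex.exactAt_iff' _ 0 1 2 (by simp) (by simp), ShortComplex.moduleCat_exact_iff]
  intro (x : P.complex.X 1 ⟶ W) (hx : P.complex.d 2 1 ≫ x = 0)
  obtain ⟨ψ, hψ⟩ := LinearMap.exists_comp_eq_of_ker_le (P.complex.d 1 0).hom x.hom fun a ha => by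
    obtain ⟨b, rfl⟩ := (hP a).mp ha
    exact congr($hx b)
  refine ⟨ModuleCat.ofHom ψ, ?_⟩
  change P.complex.d 1 0 ≫ ModuleCat.ofHom ψ = x
  ext a
  exact congr($hψ a)

theorem weakInjective_of_injective (W : ModuleCat.{u} R) [Module.Injective R W] :
    WeakInjective R W :=
  fun N _ => extVanish_one_of_injective N W

end Ext

theorem Int.exists_forall_rel_succ {A : ℤ → Type*} (P : ∀ n : ℤ, A n → A (n + 1) → Prop)
    (succ : ∀ n a b, P n a b → ∃ c, P (n + 1) b c)
    (pred : ∀ n b c, P (n + 1) b c → ∃ a, P n a b)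
    {a₀ : A 0} {a₁ : A (0 + 1)} (h₀ : P 0 a₀ a₁) :
    ∃ h : ∀ n, A n, (∀ n, P n (h n) (h (n + 1))) ∧ h 0 = a₀ := by
  choose up hup using succ
  choose down hdown using pred
  let fwd : ∀ k : ℕ, {p : A k × A (k + 1) // P k p.1 p.2} := fun k =>
    Nat.rec ⟨(a₀, a₁), h₀⟩ (fun k p => ⟨(p.1.2, up k _ _ p.2), hup k _ _ p.2⟩) k
  let bwd : ∀ k : ℕ, {p : A (Int.negSucc k) × A (Int.negSucc k + 1) // P _ p.1 p.2} := fun k =>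
    Nat.rec ⟨(down (Int.negSucc 0) a₀ a₁ h₀, a₀), hdown (Int.negSucc 0) a₀ a₁ h₀⟩
      (fun k p => ⟨(down _ _ _ p.2, p.1.1), hdown _ _ _ p.2⟩) k
  refine ⟨fun n => match n with
    | Int.ofNat k => (fwd k).1.1
    | Int.negSucc k => (bwd k).1.1, fun n => ?_, rfl⟩
  match n with
  | Int.ofNat k => exact (fwd k).2
  | Int.negSucc 0 => exact (bwd 0).2
  | Int.negSucc (k + 1) => exact (bwd (k + 1)).2

section Complexes

variable {R}

def HomExactAt (W : Type*) [AddCommGroup W] [Module R W] {I : ℤ → ModuleCat.{u} R}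
    (d : ∀ n : ℤ, I n →ₗ[R] I (n + 1)) (n : ℤ) : Prop :=
  Function.Exact (fun g : W →ₗ[R] I n => d n ∘ₗ g) (fun g : W →ₗ[R] I (n + 1) => d (n + 1) ∘ₗ g)

variable {I J : ℤ → ModuleCat.{u} R} (dI : ∀ n : ℤ, I n →ₗ[R] I (n + 1))
  (dJ : ∀ n : ℤ, J n →ₗ[R] J (n + 1))

def Anticommutes (n : ℤ) (a : J n →ₗ[R] I (n + 1)) (b : J (n + 1) →ₗ[R] I (n + 1 + 1)) : Prop :=
  ∀ y, dI (n + 1) (a y) + b (dJ n y) = 0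

variable {dI dJ}

theorem exists_anticommutes_of_ker {n : ℤ} [Module.Injective R (I (n + 1 + 1))]
    (a : J n →ₗ[R] I (n + 1)) (ha : ∀ y, dJ n y = 0 → dI (n + 1) (a y) = 0) :
    ∃ b, Anticommutes dI dJ n a b := by
  obtain ⟨b, hb⟩ := LinearMap.exists_comp_eq_of_ker_le (dJ n) (-(dI (n + 1) ∘ₗ a))
    fun y hy => by simp [ha y hy]
  exact ⟨b, fun y => by rw [← LinearMap.comp_apply b, hb]; simp⟩

theorem Anticommutes.exists_succ {n : ℤ} [Module.Injective R (I (n + 1 + 1 + 1))]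
    (hIex : Function.Exact (dI (n + 1)) (dI (n + 1 + 1)))
    (hJex : Function.Exact (dJ n) (dJ (n + 1)))
    {a : J n →ₗ[R] I (n + 1)} {b : J (n + 1) →ₗ[R] I (n + 1 + 1)}
    (hab : Anticommutes dI dJ n a b) : ∃ c, Anticommutes dI dJ (n + 1) b c := by
  refine exists_anticommutes_of_ker b fun y hy => ?_
  obtain ⟨z, rfl⟩ := (hJex y).mp hy
  rw [eq_neg_of_add_eq_zero_right (hab z), map_neg, hIex.apply_apply_eq_zero, neg_zero]

theorem Anticommutes.exists_pred {n : ℤ} (hHom : HomExactAt (J n) dI (n + 1))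
    (hJex : Function.Exact (dJ n) (dJ (n + 1)))
    {b : J (n + 1) →ₗ[R] I (n + 1 + 1)} {c : J (n + 1 + 1) →ₗ[R] I (n + 1 + 1 + 1)}
    (hbc : Anticommutes dI dJ (n + 1) b c) : ∃ a, Anticommutes dI dJ n a b := by
  obtain ⟨a, ha⟩ := (hHom (-(b ∘ₗ dJ n))).mp <| LinearMap.ext fun y => by
    simp [eq_neg_of_add_eq_zero_left (hbc (dJ n y)), hJex.apply_apply_eq_zero]
  exact ⟨a, fun y => by simp [← LinearMap.comp_apply (dI (n + 1)), ha]⟩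

theorem exists_anticommuting_family (hI : ∀ n, Module.Injective R (I n))
    (hIex : ∀ n, Function.Exact (dI n) (dI (n + 1)))
    (hJex : ∀ n, Function.Exact (dJ n) (dJ (n + 1)))
    (hHom : ∀ m n, HomExactAt (J m) dI n)
    (a₀ : J 0 →ₗ[R] I (0 + 1)) (ha₀ : ∀ y, dJ 0 y = 0 → dI (0 + 1) (a₀ y) = 0) :
    ∃ h : ∀ n, J n →ₗ[R] I (n + 1), (∀ n, Anticommutes dI dJ n (h n) (h (n + 1))) ∧ h 0 = a₀ := by
  have := hI (0 + 1 + 1)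
  obtain ⟨a₁, h₀⟩ := exists_anticommutes_of_ker a₀ ha₀
  exact Int.exists_forall_rel_succ (Anticommutes dI dJ)
    (fun n _ _ h => have := hI (n + 1 + 1 + 1); h.exists_succ (hIex _) (hJex n))
    (fun n _ _ h => h.exists_pred (hHom n _) (hJex n)) h₀

end Complexes

section Twist

variable {R} {I J : ℤ → ModuleCat.{u} R} (dI : ∀ n : ℤ, I n →ₗ[R] I (n + 1))
  (dJ : ∀ n : ℤ, J n →ₗ[R] J (n + 1)) (h : ∀ n, J n →ₗ[R] I (n + 1))

def twistDiff (n : ℤ) : (I n × J n) →ₗ[R] (I (n + 1) × J (n + 1)) :=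
  ((dI n).coprod (h n)).prod (dJ n ∘ₗ LinearMap.snd R _ _)

@[simp]
theorem twistDiff_apply (n : ℤ) (p : I n × J n) :
    twistDiff dI dJ h n p = (dI n p.1 + h n p.2, dJ n p.2) :=
  rfl

variable {dI dJ h}

theorem twistDiff_twistDiff {n : ℤ} (hIex : Function.Exact (dI n) (dI (n + 1)))
    (hJex : Function.Exact (dJ n) (dJ (n + 1))) (hh : Anticommutes dI dJ n (h n) (h (n + 1)))
    (p : I n × J n) : twistDiff dI dJ h (n + 1) (twistDiff dI dJ h n p) = 0 := by
  simp [hh p.2, hIex.apply_apply_eq_zero, hJex.apply_apply_eq_zero]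

theorem exact_twistDiff {n : ℤ} (hIex : Function.Exact (dI n) (dI (n + 1)))
    (hJex : Function.Exact (dJ n) (dJ (n + 1))) (hh : Anticommutes dI dJ n (h n) (h (n + 1))) :
    Function.Exact (twistDiff dI dJ h n) (twistDiff dI dJ h (n + 1)) := by
  refine fun p => ⟨fun hp => ?_, fun ⟨q, hq⟩ => hq ▸ twistDiff_twistDiff hIex hJex hh q⟩
  have hp₁ : dI (n + 1) p.1 + h (n + 1) p.2 = 0 := congr($hp.1)
  obtain ⟨y, hy⟩ := (hJex p.2).mp congr($hp.2)
  obtain ⟨x, hx⟩ := (hIex (p.1 - h n y)).mp <| by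
    rw [map_sub, eq_neg_of_add_eq_zero_left hp₁, eq_neg_of_add_eq_zero_left (hh y), hy, sub_self]
  exact ⟨(x, y), Prod.ext (by simp [hx]) hy⟩

theorem homExactAt_twistDiff {W : Type*} [AddCommGroup W] [Module R W] {n : ℤ}
    (hIex : Function.Exact (dI n) (dI (n + 1))) (hJex : Function.Exact (dJ n) (dJ (n + 1)))
    (hI : HomExactAt W dI n) (hJ : HomExactAt W dJ n)
    (hh : Anticommutes dI dJ n (h n) (h (n + 1))) :
    HomExactAt W (I := fun n => ModuleCat.of R (I n × J n)) (twistDiff dI dJ h) n := by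
  refine fun φ => ⟨fun hφ => ?_, fun ⟨ψ, hψ⟩ => hψ ▸ ?_⟩
  · obtain ⟨ψ₂, hψ₂⟩ := (hJ (LinearMap.snd R _ _ ∘ₗ φ)).mp <|
      LinearMap.ext fun w => congr(($hφ w).2)
    obtain ⟨ψ₁, hψ₁⟩ := (hI (LinearMap.fst R _ _ ∘ₗ φ - h n ∘ₗ ψ₂)).mp <| LinearMap.ext fun w => by
      have hφ₁ : dI (n + 1) (φ w).1 + h (n + 1) (φ w).2 = 0 := congr(($hφ w).1)
      have hψ₂ : dJ n (ψ₂ w) = (φ w).2 := congr($hψ₂ w)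
      simp [eq_neg_of_add_eq_zero_left hφ₁, eq_neg_of_add_eq_zero_left (hh (ψ₂ w)), hψ₂]
    refine ⟨ψ₁.prod ψ₂, LinearMap.ext fun w => Prod.ext ?_ congr($hψ₂ w)⟩
    simp [← LinearMap.comp_apply (dI n), hψ₁]
  · exact LinearMap.ext fun w => twistDiff_twistDiff hIex hJex hh (ψ w)

theorem IsTotallyAcyclicInjComplex.twist {𝒯 : ModuleCat.{u} R → Prop}
    (hI : IsTotallyAcyclicInjComplex R 𝒯 I dI)
    (hJ : IsTotallyAcyclicInjComplex R 𝒯 J dJ)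
    (hh : ∀ n, Anticommutes dI dJ n (h n) (h (n + 1))) :
    IsTotallyAcyclicInjComplex R 𝒯 (fun n => ModuleCat.of R (I n × J n)) (twistDiff dI dJ h) := by
  obtain ⟨hIinj, hIex, hIhom⟩ := hI
  obtain ⟨hJinj, hJex, hJhom⟩ := hJ
  refine ⟨fun n => ?_, fun n => exact_twistDiff (hIex n) (hJex n) (hh n),
    fun W hW n => homExactAt_twistDiff (hIex n) (hJex n) (hIhom W hW n) (hJhom W hW n) (hh n)⟩
  have := hIinj n
  have := hJinj n
  exact Module.Injective.prod

end Twist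

section Horseshoe

variable {R} {L M N : Type*} [AddCommGroup L] [Module R L] [AddCommGroup M] [Module R M]
  [AddCommGroup N] [Module R N] {f : L →ₗ[R] M} {g : M →ₗ[R] N}

theorem Function.Exact.eq_zero_of_injective_comp {E : Type*} [AddCommGroup E] [Module R E]
    (hfg : Function.Exact f g) {e : M →ₗ[R] E} (he : Function.Injective (e ∘ₗ f)) {m : M}
    (hem : e m = 0) (hgm : g m = 0) : m = 0 := by
  obtain ⟨l, rfl⟩ := (hfg m).mp hgm
  rw [he (hem.trans (map_zero (e ∘ₗ f)).symm), map_zero]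

theorem exists_injective_comp_eq_of_exact_s6 {A₀ A₁ A₂ A₃ : Type*} [AddCommGroup A₀] [Module R A₀]
    [AddCommGroup A₁] [Module R A₁] [AddCommGroup A₂] [Module R A₂] [AddCommGroup A₃]
    [Module R A₃] {d₀ : A₀ →ₗ[R] A₁} {d₁ : A₁ →ₗ[R] A₂} {d₂ : A₂ →ₗ[R] A₃} {π : A₁ →ₗ[R] L}
    (hπ : Function.Surjective π) (hd₀π : Function.Exact d₀ π) (hd₀ : Function.Exact d₀ d₁)
    (hd₁ : Function.Exact d₁ d₂) :
    ∃ j : L →ₗ[R] A₂, Function.Injective j ∧ j ∘ₗ π = d₁ ∧ Function.Exact j d₂ := by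
  obtain ⟨j, hj⟩ := LinearMap.exists_comp_eq_of_surjective π hπ d₁ fun x hx => by
    obtain ⟨y, rfl⟩ := (hd₀π x).mp hx
    exact hd₀.apply_apply_eq_zero y
  refine ⟨j, (injective_iff_map_eq_zero j).mpr fun l hl => ?_, hj, LinearMap.exact_iff.mpr ?_⟩
  · obtain ⟨x, rfl⟩ := hπ l
    obtain ⟨y, rfl⟩ := (hd₀ x).mp (by rwa [← hj])
    exact hd₀π.apply_apply_eq_zero y
  · rw [← LinearMap.range_comp_of_range_eq_top j (LinearMap.range_eq_top.mpr hπ), hj]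
    exact LinearMap.exact_iff.mp hd₁

/-- `Ext¹(W, L) = 0` as soon as `L ↪ E₀ → E₁ → E₂` is exact and stays exact under
`Hom(W, -)`: `(e, g)` identifies `M` with the pullback of `E₀ → E₁ ← N`, and `W → N → E₁` lifts
to `E₀`. -/
theorem exists_lift_of_homExact {E₀ E₁ E₂ W : Type*} [AddCommGroup E₀] [Module R E₀]
    [AddCommGroup E₁] [Module R E₁] [AddCommGroup E₂] [Module R E₂] [AddCommGroup W]
    [Module R W] (hfg : Function.Exact f g) (hg : Function.Surjective g) {e : M →ₗ[R] E₀}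
    {δ₀ : E₀ →ₗ[R] E₁} {δ₁ : E₁ →ₗ[R] E₂} (he : Function.Injective (e ∘ₗ f))
    (heδ : Function.Exact (e ∘ₗ f) δ₀) (hδ : Function.Exact δ₀ δ₁)
    (hW : Function.Exact (fun φ : W →ₗ[R] E₀ => δ₀ ∘ₗ φ) (fun φ : W →ₗ[R] E₁ => δ₁ ∘ₗ φ))
    (c : W →ₗ[R] N) : ∃ s : W →ₗ[R] M, g ∘ₗ s = c := by
  obtain ⟨p, hp⟩ := LinearMap.exists_comp_eq_of_surjective g hg (δ₀ ∘ₗ e) fun m hm => by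
    obtain ⟨l, rfl⟩ := (hfg m).mp hm
    exact heδ.apply_apply_eq_zero l
  have hpg (m : M) : p (g m) = δ₀ (e m) := congr($hp m)
  obtain ⟨v, hv⟩ := (hW (p ∘ₗ c)).mp <| LinearMap.ext fun w => by
    obtain ⟨m, hm⟩ := hg (c w)
    simp [← hm, hpg, hδ.apply_apply_eq_zero]
  have hvc (w : W) : δ₀ (v w) = p (c w) := congr($hv w)
  obtain ⟨s, hs⟩ := LinearMap.exists_comp_eq_of_injective (e.prod g)
    ((injective_iff_map_eq_zero _).mpr fun m hm =>
      hfg.eq_zero_of_injective_comp he congr($hm.1) congr($hm.2)) (v.prod c) <| by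
    rintro _ ⟨w, rfl⟩
    obtain ⟨m, hm⟩ := hg (c w)
    obtain ⟨l, hl⟩ := (heδ (v w - e m)).mp <| by
      rw [map_sub, hvc, ← hm, hpg, sub_self]
    have hl : e (f l) = v w - e m := hl
    exact ⟨m + f l, Prod.ext (by simp [hl]) (by simp [hm, hfg.apply_apply_eq_zero])⟩
  exact ⟨s, LinearMap.ext fun w => congr(($hs w).2)⟩

theorem surjective_coprod_of_exact {A B : Type*} [AddCommGroup A] [Module R A] [AddCommGroup B]
    [Module R B] {πL : A →ₗ[R] L} {πN : B →ₗ[R] N} {s : B →ₗ[R] M} (hfg : Function.Exact f g)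
    (hπL : Function.Surjective πL) (hπN : Function.Surjective πN) (hs : g ∘ₗ s = πN) :
    Function.Surjective ((f ∘ₗ πL).coprod s) := by
  intro m
  obtain ⟨y, hy⟩ := hπN (g m)
  obtain ⟨l, hl⟩ := (hfg (m - s y)).mp <| by
    rw [map_sub, ← LinearMap.comp_apply g s, hs, hy, sub_self]
  obtain ⟨x, rfl⟩ := hπL l
  exact ⟨(x, y), by simp [hl]⟩

theorem exact_twistDiff_coprod {I J : ℤ → ModuleCat.{u} R}
    {dI : ∀ n : ℤ, I n →ₗ[R] I (n + 1)} {dJ : ∀ n : ℤ, J n →ₗ[R] J (n + 1)}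
    {h : ∀ n, J n →ₗ[R] I (n + 1)} {n : ℤ} {πL : I (n + 1) →ₗ[R] L} {πN : J (n + 1) →ₗ[R] N}
    {e : M →ₗ[R] I (n + 1 + 1)} {s : J (n + 1) →ₗ[R] M} (hfg : Function.Exact f g)
    (hπL : Function.Exact (dI n) πL) (hπN : Function.Exact (dJ n) πN)
    (he : Function.Injective (e ∘ₗ f)) (heπ : e ∘ₗ f ∘ₗ πL = dI (n + 1)) (hs : g ∘ₗ s = πN)
    (hh : Anticommutes dI dJ n (h n) (e ∘ₗ s)) :
    Function.Exact (twistDiff dI dJ h n) ((f ∘ₗ πL).coprod s) := by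
  have heπ' (x : I (n + 1)) : e (f (πL x)) = dI (n + 1) x := congr($heπ x)
  have hs' (y : J (n + 1)) : g (s y) = πN y := congr($hs y)
  have hh' (y : J n) : dI (n + 1) (h n y) = -e (s (dJ n y)) := eq_neg_of_add_eq_zero_left (hh y)
  intro p
  constructor
  · intro (hp : f (πL p.1) + s p.2 = 0)
    obtain ⟨y, hy⟩ := (hπN p.2).mp <| by
      rw [← hs', eq_neg_of_add_eq_zero_right hp, map_neg, hfg.apply_apply_eq_zero, neg_zero]
    obtain ⟨x, hx⟩ := (hπL (p.1 - h n y)).mp <| he <| by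
      simp only [LinearMap.comp_apply, map_sub, heπ', hh', hy, sub_neg_eq_add, map_zero]
      rw [← heπ', ← map_add, hp, map_zero]
    exact ⟨(x, y), Prod.ext (by simp [hx]) hy⟩
  · rintro ⟨q, rfl⟩
    refine hfg.eq_zero_of_injective_comp he ?_ ?_
    · simp [heπ', hh', hπL.apply_apply_eq_zero]
    · simp [hs', hπN.apply_apply_eq_zero, hfg.apply_apply_eq_zero]

end Horseshoe

/-- The class of Gorenstein weak injective modules is closed under extensions. -/
theorem gorensteinWeakInjective_extension (L M N : ModuleCat.{u} R)
    (f : L →ₗ[R] M) (g : M →ₗ[R] N) (hse : ShortExactSeq R L M N f g)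
    (hL : GorensteinWeakInjective R L) (hN : GorensteinWeakInjective R N) :
    GorensteinWeakInjective R M := by
  obtain ⟨hf, hg, hfg⟩ := hse
  obtain ⟨IL, dL, πL, hIL, hπL, hdπL⟩ := hL
  obtain ⟨IN, dN, πN, hIN, hπN, hdπN⟩ := hN
  have hHom (m n : ℤ) : HomExactAt (IN m) dL n :=
    have := hIN.1 m
    hIL.2.2 _ (weakInjective_of_injective _) n
  obtain ⟨j, hj, hjπ, hjd⟩ := exists_injective_comp_eq_of_exact_s6 hπL hdπL (hIL.2.1 (-1)) (hIL.2.1 0)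
  obtain ⟨e, rfl⟩ := LinearMap.exists_comp_eq_of_ker_le (hC := hIL.1 _) f j
    ((LinearMap.ker_eq_bot.mpr hf).trans_le bot_le)
  obtain ⟨s, hs⟩ := exists_lift_of_homExact hfg hg hj hjd (hIL.2.1 1) (hHom 0 1) πN
  have hes (y : IN 0) (hy : dN 0 y = 0) : dL 1 (e (s y)) = 0 := by
    obtain ⟨z, rfl⟩ := ((hIN.2.1 (-1) : Function.Exact (dN (-1)) (dN 0)) y).mp hy
    obtain ⟨l, hl⟩ := (hfg (s (dN (-1) z))).mp <| by
      rw [← LinearMap.comp_apply g s, hs, hdπN.apply_apply_eq_zero]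
    rw [← hl]
    exact hjd.apply_apply_eq_zero l
  obtain ⟨h, hh, h0⟩ := exists_anticommuting_family hIL.1 hIL.2.1 hIN.2.1 hHom (e ∘ₗ s) hes
  refine ⟨fun n => ModuleCat.of R (IL n × IN n), twistDiff dL dN h, (f ∘ₗ πL).coprod s,
    hIL.twist hIN hh, surjective_coprod_of_exact hfg hπL hπN hs, ?_⟩
  exact exact_twistDiff_coprod hfg hdπL hdπN hj hjπ hs (h0 ▸ hh (-1))
end
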